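/- Let M be a simple matroid with building set 𝓖 on its lattice of flats, and let e be an element of its ground set. Then the set 𝓖 \ e := {S ⊆ E(M) \ {e} : S is a flat of M \ e and cl_M(S) ∈ 𝓖} is a building set of the deletion M \ e. -/

import Mathlib

variable {α : Type*}

/-- The rank of a set in a matroid: the supremum of the cardinalities of
independent subsets of the set. -/
noncomputable def Matroid.mrk (M : Matroid α) (X : Set α) : ℕ :=
  sSup (Set.ncard '' {I | M.Indep I ∧ I ⊆ X})

/-- Deletion of a set `D` from a matroid. -/
def Matroid.mdelete (M : Matroid α) (D : Set α) : Matroid α :=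
  M.restrict (M.E \ D)

/-- A flat of a (simple) matroid is *irreducible* if it is nonempty and cannot
be partitioned into two nonempty flats whose ranks add up to its rank. -/
def Matroid.IrredFlat (M : Matroid α) (F : Set α) : Prop :=
  M.IsFlat F ∧ F.Nonempty ∧
    ¬ ∃ G H : Set α, M.IsFlat G ∧ M.IsFlat H ∧ G.Nonempty ∧ H.Nonempty ∧
      Disjoint G H ∧ G ∪ H = F ∧ M.mrk F = M.mrk G + M.mrk H

/-- A *building set* on the lattice of flats of a simple matroid `M`: a family
of nonempty flats containing all irreducible flats and such that whenever two
members have nonempty meet (intersection), their join (closure of the union)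
is again a member.  (This is the Backman–Danner characterization of building
sets of the geometric lattice of flats.) -/
def Matroid.IsBuildingFam (M : Matroid α) (𝓖 : Set (Set α)) : Prop :=
  (∀ G ∈ 𝓖, M.IsFlat G ∧ G.Nonempty) ∧
  (∀ F : Set α, M.IrredFlat F → F ∈ 𝓖) ∧
  (∀ G ∈ 𝓖, ∀ G' ∈ 𝓖, (G ∩ G').Nonempty → M.closure (G ∪ G') ∈ 𝓖)

/-!
Everything happens in the restriction `M ↾ R` to an arbitrary subset `R` of the ground set;
deleting `e` is the case `R = E \ {e}`. The flats of `M ↾ R` are the traces `F ∩ R` of the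
flats of `M`, and `F = cl_M(F) ∩ R` for each of them. The join of two members of `𝓖 \ e`
has the same `M`-closure as their union, so closure under joins is inherited from `𝓖`.
For an irreducible flat `F` of `M ↾ R`, a decomposition `cl_M(F) = G ⊔ H` would trace to a
decomposition `F = (G ∩ R) ⊔ (H ∩ R)`: neither trace is empty, since otherwise `F`, and hence
its closure, would lie in the other part, and the ranks still add up because
`r(F) ≤ r(G ∩ R) + r(H ∩ R) ≤ r(G) + r(H) = r(cl_M F) = r(F)`. So `cl_M(F)` is irreducible
and lies in `𝓖`.
-/

namespace Matroid

open Set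

variable {M : Matroid α} {R X F A B G H : Set α}

lemma cast_mrk_eq_eRk [M.RankFinite] (X : Set α) : (M.mrk X : ℕ∞) = M.eRk X := by
  obtain ⟨I, hI⟩ := M.exists_isBasis' X
  have hmax : IsGreatest (ncard '' {J | M.Indep J ∧ J ⊆ X}) I.ncard := by
    refine ⟨⟨I, ⟨hI.indep, hI.subset⟩, rfl⟩, ?_⟩
    rintro _ ⟨J, ⟨hJ, hJX⟩, rfl⟩
    have hle := hJ.encard_le_eRk_of_subset hJX
    rw [← hI.encard_eq_eRk, ← hJ.finite.cast_ncard_eq, ← hI.indep.finite.cast_ncard_eq] at hle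
    exact_mod_cast hle
  rw [mrk, hmax.csSup_eq, hI.indep.finite.cast_ncard_eq, hI.encard_eq_eRk]

lemma mrk_restrict_of_subset (h : X ⊆ R) : (M ↾ R).mrk X = M.mrk X := by
  unfold mrk
  congr 1
  ext n
  constructor <;> rintro ⟨I, ⟨hI, hIX⟩, rfl⟩
  · exact ⟨I, ⟨(restrict_indep_iff.1 hI).1, hIX⟩, rfl⟩
  · exact ⟨I, ⟨restrict_indep_iff.2 ⟨hI, hIX.trans h⟩, hIX⟩, rfl⟩

lemma mrk_union_eq_add_of_mrk_closure_eq [M.RankFinite] (hAG : A ⊆ G) (hBH : B ⊆ H)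
    (h : M.mrk (M.closure (A ∪ B)) = M.mrk G + M.mrk H) :
    M.mrk (A ∪ B) = M.mrk A + M.mrk B := by
  have h' : M.eRk (A ∪ B) = M.eRk G + M.eRk H := by
    rw [← eRk_closure_eq, ← cast_mrk_eq_eRk, ← cast_mrk_eq_eRk, ← cast_mrk_eq_eRk, h,
      Nat.cast_add]
  apply Nat.cast_injective (R := ℕ∞)
  rw [Nat.cast_add, cast_mrk_eq_eRk, cast_mrk_eq_eRk, cast_mrk_eq_eRk]
  refine (M.eRk_union_le_eRk_add_eRk A B).antisymm ?_
  calc M.eRk A + M.eRk B ≤ M.eRk G + M.eRk H := add_le_add (M.eRk_mono hAG) (M.eRk_mono hBH)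
    _ = M.eRk (A ∪ B) := h'.symm

lemma IsFlat.isFlat_restrict_inter (hF : M.IsFlat F) (hR : R ⊆ M.E) :
    (M ↾ R).IsFlat (F ∩ R) := by
  rw [isFlat_iff_closure_eq, restrict_closure_eq _ inter_subset_right hR]
  refine (inter_subset_inter_left R ?_).antisymm
    (subset_inter (M.subset_closure _ (inter_subset_right.trans hR)) inter_subset_right)
  exact (M.closure_subset_closure inter_subset_left).trans hF.closure.subset

lemma IsFlat.eq_closure_inter_of_restrict (hF : (M ↾ R).IsFlat F) (hR : R ⊆ M.E) :
    F = M.closure F ∩ R :=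
  hF.closure.symm.trans (restrict_closure_eq _ hF.subset_ground hR)

lemma closure_restrict_closure (hX : X ⊆ R) (hR : R ⊆ M.E) :
    M.closure ((M ↾ R).closure X) = M.closure X := by
  rw [restrict_closure_eq _ hX hR]
  exact (M.closure_subset_closure_of_subset_closure inter_subset_left).antisymm
    (M.closure_subset_closure (subset_inter (M.subset_closure X (hX.trans hR)) hX))

lemma inter_nonempty_of_union_eq_closure (hB : M.IsFlat B) (hA : A.Nonempty)
    (hAB : Disjoint A B) (hABF : A ∪ B = M.closure F) (hFR : F ⊆ R) (hFE : F ⊆ M.E) :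
    (A ∩ R).Nonempty := by
  rw [nonempty_iff_ne_empty]
  intro hAR
  have hFB : F ⊆ B := by
    intro x hxF
    obtain hxA | hxB := (hABF ▸ M.subset_closure F hFE hxF : x ∈ A ∪ B)
    · exact (hAR.subset ⟨hxA, hFR hxF⟩).elim
    · exact hxB
  have hAB' : A ⊆ B :=
    subset_union_left.trans (hABF.trans_subset ((M.closure_subset_closure hFB).trans
      hB.closure.subset))
  exact hA.ne_empty (hAB.eq_bot_of_le hAB')

lemma IrredFlat.irredFlat_closure_of_restrict [M.RankFinite] (hF : (M ↾ R).IrredFlat F)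
    (hR : R ⊆ M.E) : M.IrredFlat (M.closure F) := by
  obtain ⟨hFflat, hFne, hirr⟩ := hF
  have hFR : F ⊆ R := hFflat.subset_ground
  have hFE : F ⊆ M.E := hFR.trans hR
  refine ⟨M.isFlat_closure F, hFne.mono (M.subset_closure F hFE), ?_⟩
  rintro ⟨G, H, hG, hH, hGne, hHne, hGH, hunion, hrk⟩
  have hunion' : G ∩ R ∪ H ∩ R = F := by
    rw [← union_inter_distrib_right, hunion, ← hFflat.eq_closure_inter_of_restrict hR]
  refine hirr ⟨G ∩ R, H ∩ R, hG.isFlat_restrict_inter hR, hH.isFlat_restrict_inter hR,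
    inter_nonempty_of_union_eq_closure hH hGne hGH hunion hFR hFE,
    inter_nonempty_of_union_eq_closure hG hHne hGH.symm (union_comm G H ▸ hunion) hFR hFE,
    hGH.mono inter_subset_left inter_subset_left, hunion', ?_⟩
  rw [mrk_restrict_of_subset hFR, mrk_restrict_of_subset inter_subset_right,
    mrk_restrict_of_subset inter_subset_right, ← hunion']
  exact mrk_union_eq_add_of_mrk_closure_eq inter_subset_left inter_subset_left (hunion' ▸ hrk)

theorem IsBuildingFam.restrict [M.RankFinite] [M.Loopless] {𝓖 : Set (Set α)}
    (h𝓖 : M.IsBuildingFam 𝓖) (hR : R ⊆ M.E) :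
    (M ↾ R).IsBuildingFam {S | (M ↾ R).IsFlat S ∧ M.closure S ∈ 𝓖} := by
  obtain ⟨hflat, hirr, hjoin⟩ := h𝓖
  refine ⟨?_, fun F hF ↦ ⟨hF.1, hirr _ (hF.irredFlat_closure_of_restrict hR)⟩, ?_⟩
  · rintro S ⟨hS, hSG⟩
    refine ⟨hS, nonempty_iff_ne_empty.2 ?_⟩
    rintro rfl
    simpa [closure_empty, loops_eq_empty] using (hflat _ hSG).2
  · rintro S ⟨hS, hSG⟩ S' ⟨hS', hS'G⟩ hSS'
    have hSR : S ⊆ R := hS.subset_ground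
    have hS'R : S' ⊆ R := hS'.subset_ground
    refine ⟨(M ↾ R).isFlat_closure _, ?_⟩
    rw [closure_restrict_closure (union_subset hSR hS'R) hR,
      ← closure_union_closure_left_eq, ← closure_union_closure_right_eq]
    exact hjoin _ hSG _ hS'G (hSS'.mono (inter_subset_inter
      (M.subset_closure S (hSR.trans hR)) (M.subset_closure S' (hS'R.trans hR))))

end Matroid

theorem building_set_of_deletion_general (M : Matroid α) [M.Finite]
    (hsimple : ∀ e ∈ M.E, ∀ f ∈ M.E, M.Indep {e, f})
    (𝓖 : Set (Set α)) (h𝓖 : M.IsBuildingFam 𝓖) (e : α) :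
    (M.mdelete {e}).IsBuildingFam
      {S : Set α | (M.mdelete {e}).IsFlat S ∧ M.closure S ∈ 𝓖} := by
  have : M.Loopless := Matroid.loopless_iff_forall_isNonloop.2 fun x hx ↦
    Matroid.indep_singleton.1 (by simpa using hsimple x hx x hx)
  exact h𝓖.restrict Set.sdiff_subset

/-- if `𝓖` is a building set on the lattice of flats of a simple
matroid `M` and `e` is an element of the ground set, then
`𝓖 \ e = {S ⊆ E(M) \ {e} : S flat of M \ e and cl_M(S) ∈ 𝓖}` is a building
set of the deletion `M \ e`. -/
theorem building_set_of_deletion (M : Matroid α) [M.Finite]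
    (hsimple : ∀ e ∈ M.E, ∀ f ∈ M.E, M.Indep {e, f})
    (𝓖 : Set (Set α)) (h𝓖 : M.IsBuildingFam 𝓖) (e : α) (he : e ∈ M.E) :
    (M.mdelete {e}).IsBuildingFam
      {S : Set α | (M.mdelete {e}).IsFlat S ∧ M.closure S ∈ 𝓖} :=
  building_set_of_deletion_general M hsimple 𝓖 h𝓖 e
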